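/- The function F is strictly decreasing on the interval (√3/2, ∞); moreover F(t) → 1/(2√3 π) as t → (√3/2)⁺ and F(t) → 0 as t → ∞. -/

import Mathlib

open Filter Topology Set

/-- `σ_{c,d}(z) = exp(2πi m (az+b)/(cz+d)) / (cz+d)^k` with the concrete Bézout choice
`a = gcdB c d`, `b = -gcdA c d` (so that `a*d - b*c = gcd c d = 1` for coprime `c,d`;
the value is independent of this choice since `m` is an integer). -/
noncomputable def sigmaP (k m : ℕ) (c d : ℤ) (z : ℂ) : ℂ :=
  Complex.exp (2 * Real.pi * Complex.I * (m : ℂ) *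
      ((Int.gcdB c d : ℂ) * z - (Int.gcdA c d : ℂ)) / ((c : ℂ) * z + (d : ℂ))) /
    ((c : ℂ) * z + (d : ℂ)) ^ k

/-- The index set `𝒫`: coprime pairs `(c,d)` with `c > 0`, together with `(0,1)`. -/
def Pset : Set (ℤ × ℤ) := {p | (IsCoprime p.1 p.2 ∧ 0 < p.1) ∨ p = (0, 1)}

/-- The Poincaré series `P_{k,m}(z) = Σ_{(c,d)∈𝒫} σ_{c,d}(z)`. -/
noncomputable def poincareP (k m : ℕ) (z : ℂ) : ℂ :=
  ∑' p : Pset, sigmaP k m p.1.1 p.1.2 z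

/-- `r_{c,d}(z) = exp(-2πα · Im z/|cz+d|²)/|cz+d|`. -/
noncomputable def rP (α : ℝ) (c d : ℤ) (z : ℂ) : ℝ :=
  Real.exp (-2 * Real.pi * α * z.im / ‖(c : ℂ) * z + (d : ℂ)‖ ^ 2) /
    ‖(c : ℂ) * z + (d : ℂ)‖

/-- The standard fundamental domain `ℱ` for `SL(2,ℤ)`. -/
noncomputable def Fdom : Set ℂ :=
  {z | 0 < z.im ∧ ((1 < ‖z‖ ∧ z.re ∈ Set.Ioc (-(1/2) : ℝ) (1/2 : ℝ)) ∨
    (‖z‖ = 1 ∧ Complex.arg z ∈ Set.Icc (Real.pi / 3) (Real.pi / 2)))}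

/-- `F(t) = (1/(4π)) · (1/4+t²)·log(1/4+t²) / (t·(t²-3/4))`. -/
noncomputable def Ffun (t : ℝ) : ℝ :=
  (1 / (4 * Real.pi)) * ((1/4 + t^2) * Real.log (1/4 + t^2)) / (t * (t^2 - 3/4))

/-- The arc `𝒜 = {e^{iθ} : θ ∈ [π/3, π/2]}`. -/
noncomputable def arcA : Set ℂ :=
  {z | ∃ θ ∈ Set.Icc (Real.pi / 3) (Real.pi / 2), z = Complex.exp (θ * Complex.I)}

/-- The segment `ℒ_ρ = {1/2 + ti : t ≥ √3/2}`. -/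
noncomputable def lineRho : Set ℂ :=
  {z | ∃ t : ℝ, Real.sqrt 3 / 2 ≤ t ∧ z = 1/2 + t * Complex.I}

/-- The segment `ℒ_i = {ti : t ≥ 1}`. -/
def lineI : Set ℂ := {z | ∃ t : ℝ, 1 ≤ t ∧ z = t * Complex.I}

/-- The curve `Γ_α = {z ∈ ℱ : |z| > 1, 2πα·Im z = log|z|/(1-|z|⁻²)}`. -/
noncomputable def GammaA (α : ℝ) : Set ℂ :=
  {z | z ∈ Fdom ∧ 1 < ‖z‖ ∧
    2 * Real.pi * α * z.im = Real.log (‖z‖) / (1 - ((‖z‖) ^ 2)⁻¹)}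

/-!
Put `x = t² - 3/4`, so that `1/4 + t² = 1 + x`. The sign of `F'(t)` is that of
`2t²x(log(1+x) + 1) - (1+x)(3x + 3/2) log(1+x)`, which is negative for `x > 0` by the classical
bound `log(1+x) > 2x/(x+2)`. As `t ↓ √3/2` we have `x ↓ 0`, and
`F(t) = (1/(4π)) · ((1+x)/t) · (log(1+x)/x) → (1/(4π)) · (2/√3)`. As `t → ∞`,
`F(t) = (1/(4π)) · ((1+x)/x) · (log(1/4 + t²)/t)`, and `log(1/4 + t²) = 2 log t + o(1)` is `o(t)`.
-/

open Real

lemma tendsto_log_one_add_div_self_nhdsGT_zero :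
    Tendsto (fun x : ℝ => log (1 + x) / x) (𝓝[>] 0) (𝓝 1) := by
  simpa [div_eq_inv_mul] using (hasDerivAt_log one_ne_zero).tendsto_slope_zero_right

lemma tendsto_log_add_sq_div_atTop (c : ℝ) :
    Tendsto (fun t : ℝ => log (c + t ^ 2) / t) atTop (𝓝 0) := by
  have hsq := tendsto_pow_atTop (α := ℝ) two_ne_zero
  have hsmall : Tendsto (fun t : ℝ => log (1 + c / t ^ 2)) atTop (𝓝 0) := by
    have h : Tendsto (fun t : ℝ => 1 + c / t ^ 2) atTop (𝓝 1) := by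
      simpa using tendsto_const_nhds.add (tendsto_const_nhds.div_atTop hsq)
    simpa [Function.comp_def] using (continuousAt_log one_ne_zero).tendsto.comp h
  have hlog : Tendsto (fun t : ℝ => 2 * (log t / t)) atTop (𝓝 0) := by
    simpa using (isLittleO_log_id_atTop.tendsto_div_nhds_zero).const_mul 2
  have hsum := (hsmall.div_atTop tendsto_id).add hlog
  rw [add_zero] at hsum
  refine hsum.congr' ?_
  filter_upwards [eventually_gt_atTop 0, hsq.eventually (eventually_gt_atTop (-c))]
    with t ht htc
  have hsplit : c + t ^ 2 = t ^ 2 * (1 + c / t ^ 2) := by field_simp; ring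
  have hne : 1 + c / t ^ 2 ≠ 0 := by
    intro h; rw [h, mul_zero] at hsplit; linarith
  rw [hsplit, log_mul (by positivity) hne, log_pow, id]
  push_cast
  ring

noncomputable def Ffun' (t : ℝ) : ℝ :=
  (2 * t ^ 2 * (t ^ 2 - 3/4) * (log (1/4 + t ^ 2) + 1)
    - (3 * t ^ 2 - 3/4) * (1/4 + t ^ 2) * log (1/4 + t ^ 2)) / (4 * π * (t * (t ^ 2 - 3/4)) ^ 2)

lemma hasDerivAt_Ffun {t : ℝ} (ht : t ≠ 0) (ht' : t ^ 2 ≠ 3/4) : HasDerivAt Ffun (Ffun' t) t := by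
  have hu : HasDerivAt (fun t : ℝ => 1/4 + t ^ 2) (2 * t) t := by
    simpa using (hasDerivAt_pow 2 t).const_add (1/4 : ℝ)
  have hN := (hasDerivAt_mul_log (by positivity : (1/4 + t ^ 2 : ℝ) ≠ 0)).comp t hu
  have hD : HasDerivAt (fun t : ℝ => t * (t ^ 2 - 3/4)) (3 * t ^ 2 - 3/4) t :=
    ((hasDerivAt_id' t).mul ((hasDerivAt_pow 2 t).sub_const (3/4 : ℝ))).congr_deriv
      (by norm_num; ring)
  have hD0 : t * (t ^ 2 - 3/4) ≠ 0 := mul_ne_zero ht (sub_ne_zero.2 ht')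
  refine ((hN.const_mul (1 / (4 * π))).div hD hD0).congr_deriv ?_
  simp only [Ffun', Function.comp_apply]
  field_simp

lemma Ffun'_neg {t : ℝ} (ht : 3/4 < t ^ 2) : Ffun' t < 0 := by
  have hx : 0 < t ^ 2 - 3/4 := by linarith
  have ht0 : t ≠ 0 := by rintro rfl; norm_num at ht
  have hlog := lt_log_one_add_of_pos hx
  rw [div_lt_iff₀ (by linarith), show 1 + (t ^ 2 - 3/4) = 1/4 + t ^ 2 by ring] at hlog
  refine div_neg_of_neg_of_pos ?_ (by positivity)
  nlinarith [mul_lt_mul_of_pos_right hlog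
    (by positivity : 0 < (t ^ 2 - 3/4) ^ 2 + 3 * (t ^ 2 - 3/4) + 3/2)]

lemma three_div_four_lt_sq {t : ℝ} (ht : √3 / 2 < t) : 3/4 < t ^ 2 := by
  have h := pow_lt_pow_left₀ ht (by positivity) two_ne_zero
  rw [div_pow, sq_sqrt (by norm_num)] at h
  linarith

lemma Ffun_strictAntiOn : StrictAntiOn Ffun (Ioi (√3 / 2)) := by
  have hderiv : ∀ t ∈ Ioi (√3 / 2), HasDerivAt Ffun (Ffun' t) t := fun t ht =>
    hasDerivAt_Ffun (lt_trans (by positivity) ht).ne' (three_div_four_lt_sq ht).ne'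
  refine strictAntiOn_of_hasDerivWithinAt_neg (f' := Ffun') (convex_Ioi _)
    (fun t ht => (hderiv t ht).continuousAt.continuousWithinAt) (fun t ht => ?_) (fun t ht => ?_)
  all_goals rw [interior_Ioi] at ht
  · exact (hderiv t ht).hasDerivWithinAt
  · exact Ffun'_neg (three_div_four_lt_sq ht)

lemma tendsto_Ffun_nhdsGT :
    Tendsto Ffun (𝓝[>] (√3 / 2)) (𝓝 (1 / (2 * √3 * π))) := by
  have hs : √3 ^ 2 = 3 := sq_sqrt (by norm_num)
  have hx : Tendsto (fun t : ℝ => t ^ 2 - 3/4) (𝓝[>] (√3 / 2)) (𝓝[>] 0) := by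
    refine tendsto_nhdsWithin_iff.2 ⟨?_, eventually_nhdsWithin_of_forall fun t ht =>
      sub_pos.2 (three_div_four_lt_sq ht)⟩
    have hc : Continuous (fun t : ℝ => t ^ 2 - 3/4) := by fun_prop
    convert (hc.tendsto (√3 / 2)).mono_left nhdsWithin_le_nhds using 2
    rw [div_pow, hs]; norm_num
  have hfactor : Tendsto (fun t : ℝ => 1 / (4 * π) * ((1/4 + t ^ 2) / t)) (𝓝[>] (√3 / 2))
      (𝓝 (1 / (4 * π) * ((1/4 + (√3 / 2) ^ 2) / (√3 / 2)))) := by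
    have hc : ContinuousAt (fun t : ℝ => 1 / (4 * π) * ((1/4 + t ^ 2) / t)) (√3 / 2) := by
      fun_prop (disch := positivity)
    exact hc.tendsto.mono_left nhdsWithin_le_nhds
  have h := hfactor.mul (tendsto_log_one_add_div_self_nhdsGT_zero.comp hx)
  convert h using 1
  · ext t
    simp only [Ffun, Function.comp_apply, div_eq_mul_inv, mul_inv]
    ring_nf
  · congr 1
    rw [div_pow, hs]
    field_simp
    ring

lemma tendsto_Ffun_atTop : Tendsto Ffun atTop (𝓝 0) := by
  have hden : Tendsto (fun t : ℝ => t ^ 2 - 3/4) atTop atTop :=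
    tendsto_atTop_add_const_right _ _ (tendsto_pow_atTop two_ne_zero)
  have hratio : Tendsto (fun t : ℝ => (1/4 + t ^ 2) / (t ^ 2 - 3/4)) atTop (𝓝 1) := by
    have h : Tendsto (fun t : ℝ => 1 + 1 / (t ^ 2 - 3/4)) atTop (𝓝 (1 + 0)) :=
      tendsto_const_nhds.add (tendsto_const_nhds.div_atTop hden)
    rw [add_zero] at h
    refine h.congr' ?_
    filter_upwards [hden.eventually_gt_atTop 0] with t ht
    rw [one_add_div ht.ne']
    ring_nf
  have h := (hratio.const_mul (1 / (4 * π))).mul (tendsto_log_add_sq_div_atTop (1/4))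
  rw [mul_zero] at h
  convert h using 1
  ext t
  simp only [Ffun, div_eq_mul_inv, mul_inv]
  ring

/-- `F` is strictly decreasing on `(√3/2, ∞)`, `F(t) → 1/(2√3π)` as
`t → (√3/2)⁺`, and `F(t) → 0` as `t → ∞`. -/
theorem Ffun_strictAnti_and_limits :
    StrictAntiOn Ffun (Set.Ioi (Real.sqrt 3 / 2)) ∧
    Tendsto Ffun (nhdsWithin (Real.sqrt 3 / 2) (Set.Ioi (Real.sqrt 3 / 2)))
      (nhds (1 / (2 * Real.sqrt 3 * Real.pi))) ∧
    Tendsto Ffun atTop (nhds 0) :=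
  ⟨Ffun_strictAntiOn, tendsto_Ffun_nhdsGT, tendsto_Ffun_atTop⟩
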